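/- Assume additionally that 𝔥 := span{e₁,…,e_{n−1}} is an Abelian ideal of 𝔤 and that [eₙ, eᵢ] = Σ_{k=1}^{n−1} d_{ki} e_k for a real (n−1)×(n−1) matrix D = (d_{ij}). Then the Dirac element satisfies 𝒟 = −(1/4) Σ_{1≤i<j≤n−1} (ε_i d_{ij} − ε_j d_{ji}) · Θ(e^i ∧ e^j ∧ e^n) − (1/2) tr(D) · Θ(e^n) in Cl(𝔤,g). -/

import Mathlib

/-!
STATEMENT 1: Dirac element of a non-isotropic almost Abelian pseudo-Riemannian
Lie algebra 𝔤 = 𝔥 ⋊_D ℝ.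
-/

noncomputable section

open Finset

variable {n : ℕ} {𝔤 : Type} [LieRing 𝔤] [LieAlgebra ℝ 𝔤]

/-- The pseudo-Riemannian metric `g` on `𝔤` for which the basis `e` is orthonormal with
signs `ε`. -/
def gform {N : ℕ} (e : Module.Basis (Fin N) ℝ 𝔤) (ε : Fin N → ℝ) : LinearMap.BilinForm ℝ 𝔤 :=
  ∑ i, ε i • LinearMap.BilinForm.linMulLin (e.coord i) (e.coord i)

/-- The quadratic form `x ↦ −g(x,x)` defining the Clifford algebra `Cl(𝔤,g)`. -/
def Qform {N : ℕ} (e : Module.Basis (Fin N) ℝ 𝔤) (ε : Fin N → ℝ) : QuadraticForm ℝ 𝔤 :=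
  LinearMap.BilinMap.toQuadraticMap (-(gform e ε))

/-- `Θ` applied to a one-form with components `α i = α(eᵢ)`. -/
def theta1 {N : ℕ} (e : Module.Basis (Fin N) ℝ 𝔤) (ε : Fin N → ℝ) (α : Fin N → ℝ) :
    CliffordAlgebra (Qform e ε) :=
  ∑ i, (ε i * α i) • CliffordAlgebra.ι (Qform e ε) (e i)

/-- `Θ` applied to a three-form with components `α i j k = α(eᵢ,eⱼ,e_k)`. -/
def theta3 {N : ℕ} (e : Module.Basis (Fin N) ℝ 𝔤) (ε : Fin N → ℝ) (α : Fin N → Fin N → Fin N → ℝ) :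
    CliffordAlgebra (Qform e ε) :=
  ∑ i, ∑ j, ∑ k,
    if i < j ∧ j < k then
      (ε i * ε j * ε k * α i j k) •
        (CliffordAlgebra.ι (Qform e ε) (e i) * CliffordAlgebra.ι (Qform e ε) (e j) *
          CliffordAlgebra.ι (Qform e ε) (e k))
    else 0

/-- Levi-Civita coefficients `Γ_{kij}` from the Koszul formula. -/
def Γcoef {N : ℕ} (ε : Fin N → ℝ) (c : Fin N → Fin N → Fin N → ℝ) (k i j : Fin N) : ℝ :=
  (1 / 2) * (ε j * c j k i - ε k * c k i j + ε i * c i j k)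

/-- The Dirac element `𝒟 = Σ_k ε_k e_k · ((1/2) Σ_{i<j} ε_i ε_j Γ_{kij} e_i e_j)`. -/
def dirac {N : ℕ} (e : Module.Basis (Fin N) ℝ 𝔤) (ε : Fin N → ℝ) (c : Fin N → Fin N → Fin N → ℝ) :
    CliffordAlgebra (Qform e ε) :=
  ∑ k, ε k •
    (CliffordAlgebra.ι (Qform e ε) (e k) *
      ((1 / 2 : ℝ) • ∑ i, ∑ j,
        if i < j then
          (ε i * ε j * Γcoef ε c k i j) •
            (CliffordAlgebra.ι (Qform e ε) (e i) * CliffordAlgebra.ι (Qform e ε) (e j))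
        else 0))

/-- Components of the coframe covector `e^i`: `e^i(e_a) = δᵢₐ`. -/
def coComp {N : ℕ} (i a : Fin N) : ℝ := if a = i then 1 else 0

/-- Components of a wedge `α ∧ β ∧ γ` of three one-forms with components `α`, `β`, `γ`. -/
def wedge3 {N : ℕ} (α β γ : Fin N → ℝ) (a b k : Fin N) : ℝ :=
  α a * (β b * γ k - β k * γ b) - α b * (β a * γ k - β k * γ a) +
    α k * (β a * γ b - β b * γ a)

section Aux

variable {N : ℕ}

lemma gform_basis (e : Module.Basis (Fin N) ℝ 𝔤) (ε : Fin N → ℝ) (a b : Fin N) :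
    gform e ε (e a) (e b) = if a = b then ε a else 0 := by
  simp only [gform, LinearMap.coe_sum, Finset.sum_apply, LinearMap.smul_apply,
    LinearMap.BilinForm.linMulLin_apply, Module.Basis.coord_apply, Module.Basis.repr_self,
    Finsupp.single_apply, smul_eq_mul]
  rw [Finset.sum_eq_single a]
  · simp [eq_comm]
  · intro b' _ hb'
    simp [Ne.symm hb']
  · simp

lemma Qform_basis (e : Module.Basis (Fin N) ℝ 𝔤) (ε : Fin N → ℝ) (a : Fin N) :
    Qform e ε (e a) = -ε a := by
  simp [Qform, LinearMap.BilinMap.toQuadraticMap_apply, gform_basis]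

lemma polar_Qform (e : Module.Basis (Fin N) ℝ 𝔤) (ε : Fin N → ℝ) {a b : Fin N} (h : a ≠ b) :
    QuadraticMap.polar (Qform e ε) (e a) (e b) = 0 := by
  rw [Qform, LinearMap.BilinMap.polar_toQuadraticMap]
  simp [gform_basis, h, h.symm]

lemma iota_anticomm (e : Module.Basis (Fin N) ℝ 𝔤) (ε : Fin N → ℝ) {a b : Fin N} (h : a ≠ b) :
    CliffordAlgebra.ι (Qform e ε) (e a) * CliffordAlgebra.ι (Qform e ε) (e b) =
      -(CliffordAlgebra.ι (Qform e ε) (e b) * CliffordAlgebra.ι (Qform e ε) (e a)) := by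
  refine eq_neg_of_add_eq_zero_left ?_
  rw [CliffordAlgebra.ι_mul_ι_add_swap, polar_Qform e ε h, map_zero]

lemma iota_sq (e : Module.Basis (Fin N) ℝ 𝔤) (ε : Fin N → ℝ) (a : Fin N) :
    CliffordAlgebra.ι (Qform e ε) (e a) * CliffordAlgebra.ι (Qform e ε) (e a) =
      algebraMap ℝ _ (-ε a) := by
  rw [CliffordAlgebra.ι_sq_scalar, Qform_basis]

section Struct

variable (e : Module.Basis (Fin (n + 1)) ℝ 𝔤) (D : Fin n → Fin n → ℝ)
  (c : Fin (n + 1) → Fin (n + 1) → Fin (n + 1) → ℝ)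
  (hc : ∀ a b, ⁅e a, e b⁆ = ∑ m, c m a b • e m)

include hc

lemma c_repr (a b m : Fin (n + 1)) : c m a b = e.repr ⁅e a, e b⁆ m := by
  rw [hc, map_sum]
  simp [Finsupp.single_apply, Finset.sum_ite_eq']

lemma c_anti (a b m : Fin (n + 1)) : c m a b = -c m b a := by
  rw [c_repr e c hc, c_repr e c hc, ← lie_skew, map_neg]
  simp

lemma c_self (a m : Fin (n + 1)) : c m a a = 0 := by
  rw [c_repr e c hc]
  simp

lemma c_hh (habelian : ∀ i j : Fin n, ⁅e i.castSucc, e j.castSucc⁆ = 0)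
    (m : Fin (n + 1)) (i j : Fin n) : c m i.castSucc j.castSucc = 0 := by
  rw [c_repr e c hc, habelian]
  simp

lemma c_last_cs (hD : ∀ i : Fin n, ⁅e (Fin.last n), e i.castSucc⁆ = ∑ k, D k i • e k.castSucc)
    (m i : Fin n) : c m.castSucc (Fin.last n) i.castSucc = D m i := by
  rw [c_repr e c hc, hD, map_sum, Finset.sum_apply']
  simp only [map_smul, Module.Basis.repr_self, Finsupp.smul_apply, Finsupp.single_apply,
    Fin.castSucc_inj, smul_eq_mul]
  rw [Finset.sum_eq_single m]
  · simp
  · intro b _ hb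
    simp [hb]
  · simp

lemma c_lastlast_cs
    (hD : ∀ i : Fin n, ⁅e (Fin.last n), e i.castSucc⁆ = ∑ k, D k i • e k.castSucc)
    (i : Fin n) : c (Fin.last n) (Fin.last n) i.castSucc = 0 := by
  rw [c_repr e c hc, hD, map_sum, Finset.sum_apply']
  simp only [map_smul, Module.Basis.repr_self, Finsupp.smul_apply, Finsupp.single_apply, smul_eq_mul]
  rw [Finset.sum_eq_zero]
  intro k _
  simp [(Fin.castSucc_lt_last k).ne]

variable (ε : Fin (n + 1) → ℝ)
  (habelian : ∀ i j : Fin n, ⁅e i.castSucc, e j.castSucc⁆ = 0)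
  (hD : ∀ i : Fin n, ⁅e (Fin.last n), e i.castSucc⁆ = ∑ k, D k i • e k.castSucc)

include habelian hD

lemma Γ1 (k i j : Fin n) : Γcoef ε c k.castSucc i.castSucc j.castSucc = 0 := by
  unfold Γcoef
  rw [c_hh e c hc habelian, c_hh e c hc habelian, c_hh e c hc habelian]
  ring

lemma Γ2 (i j : Fin n) : Γcoef ε c (Fin.last n) i.castSucc j.castSucc =
    (1 / 2) * (ε j.castSucc * D j i - ε i.castSucc * D i j) := by
  unfold Γcoef
  rw [c_last_cs e D c hc hD, c_hh e c hc habelian,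
    c_anti e c hc j.castSucc (Fin.last n) i.castSucc, c_last_cs e D c hc hD]
  ring

lemma Γ3 (k i : Fin n) : Γcoef ε c k.castSucc i.castSucc (Fin.last n) =
    (1 / 2) * (ε k.castSucc * D k i + ε i.castSucc * D i k) := by
  unfold Γcoef
  rw [c_hh e c hc habelian,
    c_anti e c hc i.castSucc (Fin.last n) k.castSucc, c_last_cs e D c hc hD,
    c_last_cs e D c hc hD]
  ring

lemma Γ4 (i : Fin n) : Γcoef ε c (Fin.last n) i.castSucc (Fin.last n) = 0 := by
  unfold Γcoef
  rw [c_lastlast_cs e D c hc hD,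
    c_anti e c hc i.castSucc (Fin.last n) (Fin.last n), c_lastlast_cs e D c hc hD,
    c_self e c hc]
  ring

end Struct

set_option maxHeartbeats 4000000 in
lemma wedge3_delta {N : ℕ} (i0 j0 k0 a b k : Fin N) (h1 : i0 < j0) (h2 : j0 < k0)
    (ha : a < b) (hb : b < k) :
    wedge3 (coComp i0) (coComp j0) (coComp k0) a b k =
      if a = i0 ∧ b = j0 ∧ k = k0 then 1 else 0 := by
  unfold wedge3 coComp
  split_ifs
  all_goals try norm_num
  all_goals exfalso
  all_goals omega

lemma theta1_last (e : Module.Basis (Fin (n + 1)) ℝ 𝔤) (ε : Fin (n + 1) → ℝ) :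
    theta1 e ε (coComp (Fin.last n)) =
      ε (Fin.last n) • CliffordAlgebra.ι (Qform e ε) (e (Fin.last n)) := by
  unfold theta1 coComp
  simp [mul_ite, ite_smul, Finset.sum_ite_eq']

lemma theta3_red (e : Module.Basis (Fin (n + 1)) ℝ 𝔤) (ε : Fin (n + 1) → ℝ) {i j : Fin n}
    (hij : i < j) :
    theta3 e ε (wedge3 (coComp i.castSucc) (coComp j.castSucc) (coComp (Fin.last n))) =
      (ε i.castSucc * ε j.castSucc * ε (Fin.last n)) •
        (CliffordAlgebra.ι (Qform e ε) (e i.castSucc) *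
          CliffordAlgebra.ι (Qform e ε) (e j.castSucc) *
          CliffordAlgebra.ι (Qform e ε) (e (Fin.last n))) := by
  have hij' : i.castSucc < j.castSucc := Fin.castSucc_lt_castSucc_iff.mpr hij
  have hjl : j.castSucc < Fin.last n := Fin.castSucc_lt_last j
  unfold theta3
  have key : ∀ a b k : Fin (n + 1),
      (if a < b ∧ b < k then
          (ε a * ε b * ε k *
              wedge3 (coComp i.castSucc) (coComp j.castSucc) (coComp (Fin.last n)) a b k) •
            (CliffordAlgebra.ι (Qform e ε) (e a) * CliffordAlgebra.ι (Qform e ε) (e b) *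
              CliffordAlgebra.ι (Qform e ε) (e k))
        else 0) =
      if a = i.castSucc ∧ b = j.castSucc ∧ k = Fin.last n then
        (ε i.castSucc * ε j.castSucc * ε (Fin.last n)) •
          (CliffordAlgebra.ι (Qform e ε) (e i.castSucc) *
            CliffordAlgebra.ι (Qform e ε) (e j.castSucc) *
            CliffordAlgebra.ι (Qform e ε) (e (Fin.last n)))
      else 0 := by
    intro a b k
    by_cases h : a < b ∧ b < k
    · rw [if_pos h, wedge3_delta _ _ _ _ _ _ hij' hjl h.1 h.2]
      by_cases ht : a = i.castSucc ∧ b = j.castSucc ∧ k = Fin.last n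
      · obtain ⟨rfl, rfl, rfl⟩ := ht
        rw [if_pos ⟨rfl, rfl, rfl⟩, if_pos ⟨rfl, rfl, rfl⟩, mul_one]
      · rw [if_neg ht, if_neg ht, mul_zero, zero_smul]
    · rw [if_neg h]
      by_cases ht : a = i.castSucc ∧ b = j.castSucc ∧ k = Fin.last n
      · obtain ⟨rfl, rfl, rfl⟩ := ht
        exact absurd ⟨hij', hjl⟩ h
      · rw [if_neg ht]
  simp only [key]
  simp [ite_and, Finset.sum_ite_eq']

lemma sum_antisym_zero {M : Type*} [AddCommGroup M] [Module ℝ M] {N : ℕ}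
    (F : Fin N → Fin N → M) (h : ∀ a b, F a b = -F b a) :
    (∑ a, ∑ b, F a b) = 0 := by
  have hs : (∑ a, ∑ b, F a b) = -(∑ a, ∑ b, F a b) := by
    calc (∑ a, ∑ b, F a b) = ∑ b, ∑ a, F a b := Finset.sum_comm
      _ = ∑ b, ∑ a, -F b a :=
          Finset.sum_congr rfl fun b _ => Finset.sum_congr rfl fun a _ => h a b
      _ = -(∑ b, ∑ a, F b a) := by simp
  have h2 : (2 : ℝ) • (∑ a, ∑ b, F a b) = 0 := by
    rw [two_smul]
    nth_rewrite 2 [hs]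
    simp
  have h3 := congrArg (fun x => ((2 : ℝ)⁻¹) • x) h2
  simpa [smul_smul] using h3

section Dirac

variable (e : Module.Basis (Fin (n + 1)) ℝ 𝔤) (ε : Fin (n + 1) → ℝ) (D : Fin n → Fin n → ℝ)
  (c : Fin (n + 1) → Fin (n + 1) → Fin (n + 1) → ℝ)
  (hc : ∀ a b, ⁅e a, e b⁆ = ∑ m, c m a b • e m)
  (habelian : ∀ i j : Fin n, ⁅e i.castSucc, e j.castSucc⁆ = 0)
  (hD : ∀ i : Fin n, ⁅e (Fin.last n), e i.castSucc⁆ = ∑ k, D k i • e k.castSucc)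

include hc habelian hD

set_option maxHeartbeats 1000000 in
lemma dirac_eq :
    dirac e ε c =
      (∑ i : Fin n, ∑ j : Fin n,
        if i < j then
          (ε (Fin.last n) * (1 / 2) *
              (ε i.castSucc * ε j.castSucc *
                ((1 / 2) * (ε j.castSucc * D j i - ε i.castSucc * D i j)))) •
            (CliffordAlgebra.ι (Qform e ε) (e i.castSucc) *
              CliffordAlgebra.ι (Qform e ε) (e j.castSucc) *
              CliffordAlgebra.ι (Qform e ε) (e (Fin.last n)))
        else 0)
      + (∑ k : Fin n,
          ε k.castSucc * (1 / 2) *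
              (ε k.castSucc * ε (Fin.last n) *
                ((1 / 2) * (ε k.castSucc * D k k + ε k.castSucc * D k k))) *
            (-ε k.castSucc)) •
          CliffordAlgebra.ι (Qform e ε) (e (Fin.last n)) := by
  unfold dirac
  rw [Fin.sum_univ_castSucc]
  have hSlast : (∑ i : Fin (n+1), ∑ j : Fin (n+1),
      if i < j then
        (ε i * ε j * Γcoef ε c (Fin.last n) i j) •
          (CliffordAlgebra.ι (Qform e ε) (e i) * CliffordAlgebra.ι (Qform e ε) (e j))
      else 0)
      = ∑ i : Fin n, ∑ j : Fin n,
        if i < j then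
          (ε i.castSucc * ε j.castSucc *
              ((1 / 2) * (ε j.castSucc * D j i - ε i.castSucc * D i j))) •
            (CliffordAlgebra.ι (Qform e ε) (e i.castSucc) *
              CliffordAlgebra.ι (Qform e ε) (e j.castSucc))
        else 0 := by
    rw [Fin.sum_univ_castSucc]
    have hlastrow : (∑ j : Fin (n+1),
        if Fin.last n < j then
          (ε (Fin.last n) * ε j * Γcoef ε c (Fin.last n) (Fin.last n) j) •
            (CliffordAlgebra.ι (Qform e ε) (e (Fin.last n)) * CliffordAlgebra.ι (Qform e ε) (e j))
        else 0) = 0 :=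
      Finset.sum_eq_zero fun j _ => if_neg (not_lt.mpr (Fin.le_last j))
    rw [hlastrow, add_zero]
    refine Finset.sum_congr rfl fun i' _ => ?_
    rw [Fin.sum_univ_castSucc]
    rw [if_pos (Fin.castSucc_lt_last i'), Γ4 e D c hc ε habelian hD i', mul_zero, zero_smul,
      add_zero]
    refine Finset.sum_congr rfl fun j' _ => ?_
    simp only [Fin.castSucc_lt_castSucc_iff]
    split_ifs with h
    · rw [Γ2 e D c hc ε habelian hD i' j']
    · rfl
  have hScs : ∀ k : Fin n, (∑ i : Fin (n+1), ∑ j : Fin (n+1),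
      if i < j then
        (ε i * ε j * Γcoef ε c k.castSucc i j) •
          (CliffordAlgebra.ι (Qform e ε) (e i) * CliffordAlgebra.ι (Qform e ε) (e j))
      else 0)
      = ∑ i : Fin n,
          (ε i.castSucc * ε (Fin.last n) *
              ((1 / 2) * (ε k.castSucc * D k i + ε i.castSucc * D i k))) •
            (CliffordAlgebra.ι (Qform e ε) (e i.castSucc) *
              CliffordAlgebra.ι (Qform e ε) (e (Fin.last n))) := by
    intro k
    rw [Fin.sum_univ_castSucc]
    have hlastrow : (∑ j : Fin (n+1),
        if Fin.last n < j then
          (ε (Fin.last n) * ε j * Γcoef ε c k.castSucc (Fin.last n) j) •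
            (CliffordAlgebra.ι (Qform e ε) (e (Fin.last n)) * CliffordAlgebra.ι (Qform e ε) (e j))
        else 0) = 0 :=
      Finset.sum_eq_zero fun j _ => if_neg (not_lt.mpr (Fin.le_last j))
    rw [hlastrow, add_zero]
    refine Finset.sum_congr rfl fun i' _ => ?_
    rw [Fin.sum_univ_castSucc]
    have hcsrow : (∑ j : Fin n,
        if i'.castSucc < j.castSucc then
          (ε i'.castSucc * ε j.castSucc * Γcoef ε c k.castSucc i'.castSucc j.castSucc) •
            (CliffordAlgebra.ι (Qform e ε) (e i'.castSucc) *
              CliffordAlgebra.ι (Qform e ε) (e j.castSucc))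
        else 0) = 0 := by
      refine Finset.sum_eq_zero fun j' _ => ?_
      split_ifs with h
      · rw [Γ1 e D c hc ε habelian hD k i' j', mul_zero, zero_smul]
      · rfl
    rw [hcsrow, zero_add, if_pos (Fin.castSucc_lt_last i'), Γ3 e D c hc ε habelian hD k i']
  rw [hSlast]
  simp only [hScs]
  simp only [mul_smul_comm, smul_smul, Finset.mul_sum, mul_ite, mul_zero, Finset.smul_sum,
    smul_ite, smul_zero]
  have hmove : ∀ x y : Fin n,
      CliffordAlgebra.ι (Qform e ε) (e (Fin.last n)) *
          (CliffordAlgebra.ι (Qform e ε) (e x.castSucc) *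
            CliffordAlgebra.ι (Qform e ε) (e y.castSucc)) =
        CliffordAlgebra.ι (Qform e ε) (e x.castSucc) *
          CliffordAlgebra.ι (Qform e ε) (e y.castSucc) *
          CliffordAlgebra.ι (Qform e ε) (e (Fin.last n)) := by
    intro x y
    rw [← mul_assoc, iota_anticomm e ε (Fin.castSucc_lt_last x).ne', neg_mul, mul_assoc,
      iota_anticomm e ε (Fin.castSucc_lt_last y).ne', mul_neg, neg_neg, ← mul_assoc]
  have hB : (∑ x : Fin n, ∑ y : Fin n,
      if x < y then
        (ε (Fin.last n) *
            (1 / 2 *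
              (ε x.castSucc * ε y.castSucc *
                (1 / 2 * (ε y.castSucc * D y x - ε x.castSucc * D x y))))) •
          (CliffordAlgebra.ι (Qform e ε) (e (Fin.last n)) *
            (CliffordAlgebra.ι (Qform e ε) (e x.castSucc) *
              CliffordAlgebra.ι (Qform e ε) (e y.castSucc)))
      else 0)
      = ∑ i : Fin n, ∑ j : Fin n,
        if i < j then
          (ε (Fin.last n) * (1 / 2) *
              (ε i.castSucc * ε j.castSucc *
                ((1 / 2) * (ε j.castSucc * D j i - ε i.castSucc * D i j)))) •
            (CliffordAlgebra.ι (Qform e ε) (e i.castSucc) *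
              CliffordAlgebra.ι (Qform e ε) (e j.castSucc) *
              CliffordAlgebra.ι (Qform e ε) (e (Fin.last n)))
        else 0 := by
    refine Finset.sum_congr rfl fun x _ => Finset.sum_congr rfl fun y _ => ?_
    split_ifs with h
    · rw [hmove x y]
      congr 1
      ring
    · rfl
  rw [hB]
  have hA : (∑ x : Fin n, ∑ y : Fin n,
      (ε x.castSucc *
          (1 / 2 *
            (ε y.castSucc * ε (Fin.last n) *
              (1 / 2 * (ε x.castSucc * D x y + ε y.castSucc * D y x))))) •
        (CliffordAlgebra.ι (Qform e ε) (e x.castSucc) *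
          (CliffordAlgebra.ι (Qform e ε) (e y.castSucc) *
            CliffordAlgebra.ι (Qform e ε) (e (Fin.last n)))))
      = (∑ k : Fin n,
          ε k.castSucc * (1 / 2) *
              (ε k.castSucc * ε (Fin.last n) *
                ((1 / 2) * (ε k.castSucc * D k k + ε k.castSucc * D k k))) *
            (-ε k.castSucc)) •
          CliffordAlgebra.ι (Qform e ε) (e (Fin.last n)) := by
    have hsplit : ∀ x y : Fin n,
        (ε x.castSucc *
            (1 / 2 *
              (ε y.castSucc * ε (Fin.last n) *
                (1 / 2 * (ε x.castSucc * D x y + ε y.castSucc * D y x))))) •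
          (CliffordAlgebra.ι (Qform e ε) (e x.castSucc) *
            (CliffordAlgebra.ι (Qform e ε) (e y.castSucc) *
              CliffordAlgebra.ι (Qform e ε) (e (Fin.last n))))
        = (if y = x then
            (ε x.castSucc * (1 / 2) *
                (ε x.castSucc * ε (Fin.last n) *
                  ((1 / 2) * (ε x.castSucc * D x x + ε x.castSucc * D x x))) *
              (-ε x.castSucc)) •
              CliffordAlgebra.ι (Qform e ε) (e (Fin.last n))
          else 0)
          + (if y = x then 0 else
            (ε x.castSucc *
                (1 / 2 *
                  (ε y.castSucc * ε (Fin.last n) *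
                    (1 / 2 * (ε x.castSucc * D x y + ε y.castSucc * D y x))))) •
              (CliffordAlgebra.ι (Qform e ε) (e x.castSucc) *
                (CliffordAlgebra.ι (Qform e ε) (e y.castSucc) *
                  CliffordAlgebra.ι (Qform e ε) (e (Fin.last n))))) := by
      intro x y
      have hdiag : CliffordAlgebra.ι (Qform e ε) (e y.castSucc) *
          (CliffordAlgebra.ι (Qform e ε) (e y.castSucc) *
            CliffordAlgebra.ι (Qform e ε) (e (Fin.last n)))
          = (-ε y.castSucc) • CliffordAlgebra.ι (Qform e ε) (e (Fin.last n)) := by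
        rw [← mul_assoc, iota_sq e ε, ← Algebra.smul_def]
      by_cases h : y = x
      · subst h
        rw [if_pos rfl, if_pos rfl, add_zero, hdiag, smul_smul]
        congr 1
        ring
      · rw [if_neg h, if_neg h, zero_add]
    rw [show (∑ x : Fin n, ∑ y : Fin n,
        (ε x.castSucc *
            (1 / 2 *
              (ε y.castSucc * ε (Fin.last n) *
                (1 / 2 * (ε x.castSucc * D x y + ε y.castSucc * D y x))))) •
          (CliffordAlgebra.ι (Qform e ε) (e x.castSucc) *
            (CliffordAlgebra.ι (Qform e ε) (e y.castSucc) *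
              CliffordAlgebra.ι (Qform e ε) (e (Fin.last n)))))
        = ∑ x : Fin n, ∑ y : Fin n,
          ((if y = x then
            (ε x.castSucc * (1 / 2) *
                (ε x.castSucc * ε (Fin.last n) *
                  ((1 / 2) * (ε x.castSucc * D x x + ε x.castSucc * D x x))) *
              (-ε x.castSucc)) •
              CliffordAlgebra.ι (Qform e ε) (e (Fin.last n))
          else 0)
          + (if y = x then 0 else
            (ε x.castSucc *
                (1 / 2 *
                  (ε y.castSucc * ε (Fin.last n) *
                    (1 / 2 * (ε x.castSucc * D x y + ε y.castSucc * D y x))))) •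
              (CliffordAlgebra.ι (Qform e ε) (e x.castSucc) *
                (CliffordAlgebra.ι (Qform e ε) (e y.castSucc) *
                  CliffordAlgebra.ι (Qform e ε) (e (Fin.last n))))))
      from Finset.sum_congr rfl fun x _ => Finset.sum_congr rfl fun y _ => hsplit x y]
    simp only [Finset.sum_add_distrib]
    have hzero : (∑ x : Fin n, ∑ y : Fin n,
        if y = x then 0 else
          (ε x.castSucc *
              (1 / 2 *
                (ε y.castSucc * ε (Fin.last n) *
                  (1 / 2 * (ε x.castSucc * D x y + ε y.castSucc * D y x))))) •
            (CliffordAlgebra.ι (Qform e ε) (e x.castSucc) *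
              (CliffordAlgebra.ι (Qform e ε) (e y.castSucc) *
                CliffordAlgebra.ι (Qform e ε) (e (Fin.last n))))) = 0 := by
      refine sum_antisym_zero _ fun a b => ?_
      by_cases h : b = a
      · subst h
        simp
      · rw [if_neg h, if_neg (Ne.symm h)]
        have hM : CliffordAlgebra.ι (Qform e ε) (e a.castSucc) *
            (CliffordAlgebra.ι (Qform e ε) (e b.castSucc) *
              CliffordAlgebra.ι (Qform e ε) (e (Fin.last n)))
            = -(CliffordAlgebra.ι (Qform e ε) (e b.castSucc) *
              (CliffordAlgebra.ι (Qform e ε) (e a.castSucc) *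
                CliffordAlgebra.ι (Qform e ε) (e (Fin.last n)))) := by
          rw [← mul_assoc, iota_anticomm e ε (fun hh => (Ne.symm h) (Fin.castSucc_inj.mp hh)),
            neg_mul, mul_assoc]
        rw [hM, smul_neg, neg_inj]
        congr 1
        ring
    rw [hzero, add_zero]
    have hcoll : ∀ x : Fin n, (∑ y : Fin n,
        if y = x then
          (ε x.castSucc * (1 / 2) *
              (ε x.castSucc * ε (Fin.last n) *
                ((1 / 2) * (ε x.castSucc * D x x + ε x.castSucc * D x x))) *
            (-ε x.castSucc)) •
            CliffordAlgebra.ι (Qform e ε) (e (Fin.last n))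
        else 0)
        = (ε x.castSucc * (1 / 2) *
              (ε x.castSucc * ε (Fin.last n) *
                ((1 / 2) * (ε x.castSucc * D x x + ε x.castSucc * D x x))) *
            (-ε x.castSucc)) •
            CliffordAlgebra.ι (Qform e ε) (e (Fin.last n)) := by
      intro x
      simp
    simp only [hcoll]
    exact Finset.sum_smul.symm
  exact (congrArg₂ HAdd.hAdd hA rfl).trans (add_comm _ _)

end Dirac

end Aux

/-- Let `𝔤` be an `(n+1)`-dimensional real Lie algebra with orthonormal
basis `e₀, …, eₙ` (signature signs `ε`), such that `𝔥 := span{e₀,…,e_{n-1}}` is an Abelian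
ideal and `⁅eₙ, eᵢ⁆ = Σ_k D_{ki} e_k` for a real matrix `D` (an almost Abelian Lie algebra,
with `𝔥` non-degenerate).  Then the Dirac element satisfies
`𝒟 = −(1/4) Σ_{i<j≤n−1} (εᵢ d_{ij} − εⱼ d_{ji}) Θ(e^i∧e^j∧e^n) − (1/2) tr(D) Θ(e^n)`. -/
theorem dirac_almost_abelian
    (e : Module.Basis (Fin (n + 1)) ℝ 𝔤) (ε : Fin (n + 1) → ℝ) (D : Fin n → Fin n → ℝ)
    (c : Fin (n + 1) → Fin (n + 1) → Fin (n + 1) → ℝ)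
    (hε : ∀ i, ε i = 1 ∨ ε i = -1)
    (habelian : ∀ i j : Fin n, ⁅e i.castSucc, e j.castSucc⁆ = 0)
    (hD : ∀ i : Fin n, ⁅e (Fin.last n), e i.castSucc⁆ = ∑ k, D k i • e k.castSucc)
    (hc : ∀ a b, ⁅e a, e b⁆ = ∑ m, c m a b • e m) :
    dirac e ε c =
      (-(1 / 4 : ℝ)) •
          (∑ i : Fin n, ∑ j : Fin n,
            if i < j then
              (ε i.castSucc * D i j - ε j.castSucc * D j i) •
                theta3 e ε
                  (wedge3 (coComp i.castSucc) (coComp j.castSucc) (coComp (Fin.last n)))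
            else 0)
        - ((1 / 2 : ℝ) * ∑ k, D k k) • theta1 e ε (coComp (Fin.last n)) := by
  rw [dirac_eq e ε D c hc habelian hD, theta1_last e ε]
  have h1 : (∑ i : Fin n, ∑ j : Fin n,
      if i < j then
        (ε i.castSucc * D i j - ε j.castSucc * D j i) •
          theta3 e ε (wedge3 (coComp i.castSucc) (coComp j.castSucc) (coComp (Fin.last n)))
      else 0)
      = ∑ i : Fin n, ∑ j : Fin n,
        if i < j then
          ((ε i.castSucc * D i j - ε j.castSucc * D j i) *
              (ε i.castSucc * ε j.castSucc * ε (Fin.last n))) •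
            (CliffordAlgebra.ι (Qform e ε) (e i.castSucc) *
              CliffordAlgebra.ι (Qform e ε) (e j.castSucc) *
              CliffordAlgebra.ι (Qform e ε) (e (Fin.last n)))
        else 0 := by
    refine Finset.sum_congr rfl fun i _ => Finset.sum_congr rfl fun j _ => ?_
    split_ifs with h
    · rw [theta3_red e ε h, smul_smul]
    · rfl
  rw [h1, sub_eq_add_neg, smul_smul, ← neg_smul]
  simp only [Finset.smul_sum, smul_ite, smul_zero, smul_smul]
  congr 1
  · refine Finset.sum_congr rfl fun i _ => Finset.sum_congr rfl fun j _ => ?_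
    split_ifs with h
    · congr 1
      rcases hε i.castSucc with hi | hi <;> rcases hε j.castSucc with hj | hj <;>
        rw [hi, hj] <;> ring
    · rfl
  · congr 1
    calc (∑ k : Fin n,
        ε k.castSucc * (1 / 2) *
            (ε k.castSucc * ε (Fin.last n) *
              ((1 / 2) * (ε k.castSucc * D k k + ε k.castSucc * D k k))) *
          (-ε k.castSucc))
        = ∑ k : Fin n, (-(1 / 2) * ε (Fin.last n)) * D k k := by
          refine Finset.sum_congr rfl fun k _ => ?_
          rcases hε k.castSucc with hk | hk <;> rw [hk] <;> ring
      _ = (-(1 / 2) * ε (Fin.last n)) * ∑ k : Fin n, D k k := by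
          rw [Finset.mul_sum]
      _ = -((1 / 2 * ∑ k : Fin n, D k k) * ε (Fin.last n)) := by ring

end
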